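/- Let N ≥ 2, let U ⊆ ℝ² be open, and let g, a₁, …, a_{N−1} be smooth real functions on U. Define H(x,p) = (1/2)p₁² + g(x)p₁p₂ + (1/2)p₂², f(x,p) = ∑_{m=1}^{N−1} a_m(x)p₁^{N−m}p₂^{m}, and, on the set Ω = {(x,s) ∈ U × ℝ : 1 + 2g(x)s + s² > 0}, define λ(x,s) = (1 + 2g(x)s + s²)^{−N/2}·∑_{m=1}^{N−1} a_m(x) s^m. Then: (1) f(x,p) = (p₁² + 2g(x)p₁p₂ + p₂²)^{N/2}·λ(x, p₂/p₁) for every (x,p) with p₁ > 0 and 1 + 2g(x)(p₂/p₁) + (p₂/p₁)² > 0; and (2) the canonical Poisson bracket {f,H}(x,p) vanishes for all such (x,p) if and only if λ satisfies the linear first-order PDE (1 + g·s)·λ_{x¹} + (g + s)·λ_{x²} + (s²·g_{x¹} − s·g_{x²})·λ_s = 0 on Ω. -/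

import Mathlib

/-- Partial derivative in the first variable of a function of two real variables. -/
noncomputable def pd1 (g : ℝ → ℝ → ℝ) (x1 x2 : ℝ) : ℝ := deriv (fun t => g t x2) x1

/-- Partial derivative in the second variable of a function of two real variables. -/
noncomputable def pd2 (g : ℝ → ℝ → ℝ) (x1 x2 : ℝ) : ℝ := deriv (fun t => g x1 t) x2

/-- The canonical Poisson bracket on `T*ℝ²` with coordinates `(x¹, x², p₁, p₂)`. -/
noncomputable def pbracket (f g : ℝ → ℝ → ℝ → ℝ → ℝ) (x1 x2 p1 p2 : ℝ) : ℝ :=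
    deriv (fun t => f t x2 p1 p2) x1 * deriv (fun t => g x1 x2 t p2) p1
  - deriv (fun t => f x1 x2 t p2) p1 * deriv (fun t => g t x2 p1 p2) x1
  + deriv (fun t => f x1 t p1 p2) x2 * deriv (fun t => g x1 x2 p1 t) p2
  - deriv (fun t => f x1 x2 p1 t) p2 * deriv (fun t => g x1 t p1 p2) x2

lemma hasDerivAt_pd1' {U : Set (ℝ×ℝ)} (hU : IsOpen U) {h : ℝ→ℝ→ℝ}
    (hh : ContDiffOn ℝ (⊤ : ℕ∞) (fun z : ℝ×ℝ => h z.1 z.2) U) {x1 x2 : ℝ} (hx : (x1,x2) ∈ U) :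
    HasDerivAt (fun t => h t x2) (pd1 h x1 x2) x1 := by
  have hd : DifferentiableAt ℝ (fun z : ℝ×ℝ => h z.1 z.2) (x1,x2) :=
    (hh.contDiffAt (hU.mem_nhds hx)).differentiableAt (by simp)
  have hc : DifferentiableAt ℝ (fun t : ℝ => ((t, x2) : ℝ×ℝ)) x1 :=
    differentiableAt_id.prodMk (differentiableAt_const x2)
  have : DifferentiableAt ℝ (fun t => h t x2) x1 := by have := hd.comp x1 hc; exact this
  exact this.hasDerivAt

lemma hasDerivAt_pd2' {U : Set (ℝ×ℝ)} (hU : IsOpen U) {h : ℝ→ℝ→ℝ}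
    (hh : ContDiffOn ℝ (⊤ : ℕ∞) (fun z : ℝ×ℝ => h z.1 z.2) U) {x1 x2 : ℝ} (hx : (x1,x2) ∈ U) :
    HasDerivAt (fun t => h x1 t) (pd2 h x1 x2) x2 := by
  have hd : DifferentiableAt ℝ (fun z : ℝ×ℝ => h z.1 z.2) (x1,x2) :=
    (hh.contDiffAt (hU.mem_nhds hx)).differentiableAt (by simp)
  have hc : DifferentiableAt ℝ (fun t : ℝ => ((x1, t) : ℝ×ℝ)) x2 :=
    (differentiableAt_const x1).prodMk differentiableAt_id
  have : DifferentiableAt ℝ (fun t => h x1 t) x2 := hd.comp x2 hc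
  exact this.hasDerivAt

/-- The explicit value of `{f,H}`. -/
noncomputable def Ebr (N : ℕ) (g : ℝ → ℝ → ℝ) (a : ℕ → ℝ → ℝ → ℝ) (x1 x2 p1 p2 : ℝ) : ℝ :=
    (∑ m ∈ Finset.Icc 1 (N-1), pd1 (a m) x1 x2 * (p1^(N-m)*p2^m)) * (p1 + g x1 x2 * p2)
  - (∑ m ∈ Finset.Icc 1 (N-1), a m x1 x2 * (((N-m : ℕ):ℝ) * p1^(N-m-1)) * p2^m)
      * (pd1 g x1 x2 * (p1*p2))
  + (∑ m ∈ Finset.Icc 1 (N-1), pd2 (a m) x1 x2 * (p1^(N-m)*p2^m)) * (g x1 x2 * p1 + p2)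
  - (∑ m ∈ Finset.Icc 1 (N-1), a m x1 x2 * p1^(N-m) * (((m : ℕ):ℝ) * p2^(m-1)))
      * (pd2 g x1 x2 * (p1*p2))

lemma pbracket_eq (N : ℕ)
    (U : Set (ℝ × ℝ)) (hU : IsOpen U)
    (g : ℝ → ℝ → ℝ) (a : ℕ → ℝ → ℝ → ℝ)
    (hg : ContDiffOn ℝ (⊤ : ℕ∞) (fun z : ℝ × ℝ => g z.1 z.2) U)
    (ha : ∀ m ∈ Finset.Icc 1 (N - 1), ContDiffOn ℝ (⊤ : ℕ∞) (fun z : ℝ × ℝ => a m z.1 z.2) U)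
    (H f : ℝ → ℝ → ℝ → ℝ → ℝ)
    (hH : ∀ x1 x2 p1 p2 : ℝ, H x1 x2 p1 p2 =
      (1 / 2) * p1 ^ 2 + g x1 x2 * p1 * p2 + (1 / 2) * p2 ^ 2)
    (hf : ∀ x1 x2 p1 p2 : ℝ, f x1 x2 p1 p2 =
      ∑ m ∈ Finset.Icc 1 (N - 1), a m x1 x2 * p1 ^ (N - m) * p2 ^ m)
    (x1 x2 p1 p2 : ℝ) (hx : (x1, x2) ∈ U) :
    pbracket f H x1 x2 p1 p2 = Ebr N g a x1 x2 p1 p2 := by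
  have hfx1 : HasDerivAt (fun t => f t x2 p1 p2)
      (∑ m ∈ Finset.Icc 1 (N-1), pd1 (a m) x1 x2 * (p1^(N-m)*p2^m)) x1 := by
    have key : HasDerivAt (fun t => ∑ m ∈ Finset.Icc 1 (N-1), a m t x2 * (p1^(N-m)*p2^m))
        (∑ m ∈ Finset.Icc 1 (N-1), pd1 (a m) x1 x2 * (p1^(N-m)*p2^m)) x1 :=
      HasDerivAt.fun_sum fun m hm => (hasDerivAt_pd1' hU (ha m hm) hx).mul_const _
    refine key.congr_of_eventuallyEq (Filter.Eventually.of_forall fun t => ?_)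
    simp only [hf]; exact Finset.sum_congr rfl fun m _ => by ring
  have hfx2 : HasDerivAt (fun t => f x1 t p1 p2)
      (∑ m ∈ Finset.Icc 1 (N-1), pd2 (a m) x1 x2 * (p1^(N-m)*p2^m)) x2 := by
    have key : HasDerivAt (fun t => ∑ m ∈ Finset.Icc 1 (N-1), a m x1 t * (p1^(N-m)*p2^m))
        (∑ m ∈ Finset.Icc 1 (N-1), pd2 (a m) x1 x2 * (p1^(N-m)*p2^m)) x2 :=
      HasDerivAt.fun_sum fun m hm => (hasDerivAt_pd2' hU (ha m hm) hx).mul_const _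
    refine key.congr_of_eventuallyEq (Filter.Eventually.of_forall fun t => ?_)
    simp only [hf]; exact Finset.sum_congr rfl fun m _ => by ring
  have hfp1 : HasDerivAt (fun t => f x1 x2 t p2)
      (∑ m ∈ Finset.Icc 1 (N-1), a m x1 x2 * (((N-m : ℕ):ℝ) * p1^(N-m-1)) * p2^m) p1 := by
    have key : HasDerivAt (fun t => ∑ m ∈ Finset.Icc 1 (N-1), a m x1 x2 * t^(N-m) * p2^m)
        (∑ m ∈ Finset.Icc 1 (N-1), a m x1 x2 * (((N-m : ℕ):ℝ) * p1^(N-m-1)) * p2^m) p1 := by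
      refine HasDerivAt.fun_sum fun m hm => ?_
      exact ((hasDerivAt_pow (N-m) p1).const_mul (a m x1 x2)).mul_const (p2^m)
    refine key.congr_of_eventuallyEq (Filter.Eventually.of_forall fun t => ?_)
    simp only [hf]
  have hfp2 : HasDerivAt (fun t => f x1 x2 p1 t)
      (∑ m ∈ Finset.Icc 1 (N-1), a m x1 x2 * p1^(N-m) * (((m : ℕ):ℝ) * p2^(m-1))) p2 := by
    have key : HasDerivAt (fun t => ∑ m ∈ Finset.Icc 1 (N-1), a m x1 x2 * p1^(N-m) * t^m)
        (∑ m ∈ Finset.Icc 1 (N-1), a m x1 x2 * p1^(N-m) * (((m : ℕ):ℝ) * p2^(m-1))) p2 := by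
      refine HasDerivAt.fun_sum fun m hm => ?_
      exact (hasDerivAt_pow m p2).const_mul (a m x1 x2 * p1^(N-m))
    refine key.congr_of_eventuallyEq (Filter.Eventually.of_forall fun t => ?_)
    simp only [hf]
  have hHp1 : HasDerivAt (fun t => H x1 x2 t p2) (p1 + g x1 x2 * p2) p1 := by
    have key : HasDerivAt (fun t : ℝ => (1/2) * t^2 + g x1 x2 * t * p2 + (1/2) * p2^2)
        (p1 + g x1 x2 * p2) p1 := by
      have h1 := (hasDerivAt_pow 2 p1).const_mul (1/2 : ℝ)
      have h2 := ((hasDerivAt_id p1).const_mul (g x1 x2)).mul_const p2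
      rw [show p1 + g x1 x2 * p2
          = (1/2 : ℝ) * (((2:ℕ):ℝ) * p1^(2-1)) + g x1 x2 * 1 * p2 from by push_cast; ring]
      exact (h1.add h2).add_const ((1/2) * p2^2)
    refine key.congr_of_eventuallyEq (Filter.Eventually.of_forall fun t => ?_)
    simp only [hH]
  have hHp2 : HasDerivAt (fun t => H x1 x2 p1 t) (g x1 x2 * p1 + p2) p2 := by
    have key : HasDerivAt (fun t : ℝ => (1/2) * p1^2 + g x1 x2 * p1 * t + (1/2) * t^2)
        (g x1 x2 * p1 + p2) p2 := by
      have h1 := (hasDerivAt_id p2).const_mul (g x1 x2 * p1)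
      have h2 := (hasDerivAt_pow 2 p2).const_mul (1/2 : ℝ)
      rw [show g x1 x2 * p1 + p2
          = g x1 x2 * p1 * 1 + (1/2 : ℝ) * (((2:ℕ):ℝ) * p2^(2-1)) from by push_cast; ring]
      exact (h1.const_add ((1/2) * p1^2)).add h2
    refine key.congr_of_eventuallyEq (Filter.Eventually.of_forall fun t => ?_)
    simp only [hH]
  have hHx1 : HasDerivAt (fun t => H t x2 p1 p2) (pd1 g x1 x2 * (p1 * p2)) x1 := by
    have key : HasDerivAt (fun t : ℝ => (1/2) * p1^2 + g t x2 * p1 * p2 + (1/2) * p2^2)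
        (pd1 g x1 x2 * (p1 * p2)) x1 := by
      rw [show pd1 g x1 x2 * (p1 * p2) = pd1 g x1 x2 * p1 * p2 from by ring]
      exact ((((hasDerivAt_pd1' hU hg hx).mul_const p1).mul_const p2).const_add
        ((1/2) * p1^2)).add_const ((1/2) * p2^2)
    refine key.congr_of_eventuallyEq (Filter.Eventually.of_forall fun t => ?_)
    simp only [hH]
  have hHx2 : HasDerivAt (fun t => H x1 t p1 p2) (pd2 g x1 x2 * (p1 * p2)) x2 := by
    have key : HasDerivAt (fun t : ℝ => (1/2) * p1^2 + g x1 t * p1 * p2 + (1/2) * p2^2)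
        (pd2 g x1 x2 * (p1 * p2)) x2 := by
      rw [show pd2 g x1 x2 * (p1 * p2) = pd2 g x1 x2 * p1 * p2 from by ring]
      exact ((((hasDerivAt_pd2' hU hg hx).mul_const p1).mul_const p2).const_add
        ((1/2) * p1^2)).add_const ((1/2) * p2^2)
    refine key.congr_of_eventuallyEq (Filter.Eventually.of_forall fun t => ?_)
    simp only [hH]
  unfold pbracket Ebr
  rw [hfx1.deriv, hfx2.deriv, hfp1.deriv, hfp2.deriv, hHp1.deriv, hHp2.deriv,
    hHx1.deriv, hHx2.deriv]
section lamderiv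

variable (N : ℕ) {U : Set (ℝ × ℝ)} (hU : IsOpen U)
  {g : ℝ → ℝ → ℝ} {a : ℕ → ℝ → ℝ → ℝ}
  (hg : ContDiffOn ℝ (⊤ : ℕ∞) (fun z : ℝ × ℝ => g z.1 z.2) U)
  (ha : ∀ m ∈ Finset.Icc 1 (N - 1), ContDiffOn ℝ (⊤ : ℕ∞) (fun z : ℝ × ℝ => a m z.1 z.2) U)
  {lam : ℝ → ℝ → ℝ → ℝ}
  (hlam : ∀ x1 x2 s : ℝ, (x1, x2) ∈ U → 0 < 1 + 2 * g x1 x2 * s + s ^ 2 →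
      lam x1 x2 s = (1 + 2 * g x1 x2 * s + s ^ 2) ^ (-(N : ℝ) / 2) *
        ∑ m ∈ Finset.Icc 1 (N - 1), a m x1 x2 * s ^ m)
  {x1 x2 s : ℝ} (hx : (x1, x2) ∈ U) (hQ : 0 < 1 + 2 * g x1 x2 * s + s ^ 2)

include hU hg ha hlam hx hQ in
lemma lam_deriv1 :
    HasDerivAt (fun t => lam t x2 s)
      (2 * pd1 g x1 x2 * s * (-(N:ℝ)/2)
          * (1 + 2 * g x1 x2 * s + s ^ 2) ^ (-(N:ℝ)/2 - 1)
          * (∑ m ∈ Finset.Icc 1 (N-1), a m x1 x2 * s ^ m)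
        + (1 + 2 * g x1 x2 * s + s ^ 2) ^ (-(N:ℝ)/2)
          * ∑ m ∈ Finset.Icc 1 (N-1), pd1 (a m) x1 x2 * s ^ m) x1 := by
  have hQd : HasDerivAt (fun t => 1 + 2 * g t x2 * s + s ^ 2) (2 * pd1 g x1 x2 * s) x1 :=
    ((((hasDerivAt_pd1' hU hg hx).const_mul 2).mul_const s).const_add 1).add_const (s^2)
  have hrp := hQd.rpow_const (p := -(N:ℝ)/2) (Or.inl (ne_of_gt hQ))
  have hAd : HasDerivAt (fun t => ∑ m ∈ Finset.Icc 1 (N-1), a m t x2 * s ^ m)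
      (∑ m ∈ Finset.Icc 1 (N-1), pd1 (a m) x1 x2 * s ^ m) x1 :=
    HasDerivAt.fun_sum fun m hm => (hasDerivAt_pd1' hU (ha m hm) hx).mul_const _
  have hF := hrp.mul hAd
  have hmemU : ∀ᶠ t in nhds x1, (t, x2) ∈ U := by
    have hc : ContinuousAt (fun t : ℝ => ((t, x2) : ℝ×ℝ)) x1 :=
      (continuous_id.prodMk continuous_const).continuousAt
    exact hc.preimage_mem_nhds (hU.mem_nhds hx)
  have hQev : ∀ᶠ t in nhds x1, 0 < 1 + 2 * g t x2 * s + s ^ 2 := by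
    have hc : ContinuousAt (fun t => 1 + 2 * g t x2 * s + s ^ 2) x1 := hQd.continuousAt
    exact hc.preimage_mem_nhds (isOpen_Ioi.mem_nhds hQ)
  have hee : (fun t => lam t x2 s) =ᶠ[nhds x1]
      (fun t => (1 + 2 * g t x2 * s + s ^ 2) ^ (-(N:ℝ)/2)
        * ∑ m ∈ Finset.Icc 1 (N-1), a m t x2 * s ^ m) := by
    filter_upwards [hmemU, hQev] with t h1 h2
    exact hlam t x2 s h1 h2
  exact HasDerivAt.congr_of_eventuallyEq hF hee

include hU hg ha hlam hx hQ in
lemma lam_deriv2 :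
    HasDerivAt (fun t => lam x1 t s)
      (2 * pd2 g x1 x2 * s * (-(N:ℝ)/2)
          * (1 + 2 * g x1 x2 * s + s ^ 2) ^ (-(N:ℝ)/2 - 1)
          * (∑ m ∈ Finset.Icc 1 (N-1), a m x1 x2 * s ^ m)
        + (1 + 2 * g x1 x2 * s + s ^ 2) ^ (-(N:ℝ)/2)
          * ∑ m ∈ Finset.Icc 1 (N-1), pd2 (a m) x1 x2 * s ^ m) x2 := by
  have hQd : HasDerivAt (fun t => 1 + 2 * g x1 t * s + s ^ 2) (2 * pd2 g x1 x2 * s) x2 :=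
    ((((hasDerivAt_pd2' hU hg hx).const_mul 2).mul_const s).const_add 1).add_const (s^2)
  have hrp := hQd.rpow_const (p := -(N:ℝ)/2) (Or.inl (ne_of_gt hQ))
  have hAd : HasDerivAt (fun t => ∑ m ∈ Finset.Icc 1 (N-1), a m x1 t * s ^ m)
      (∑ m ∈ Finset.Icc 1 (N-1), pd2 (a m) x1 x2 * s ^ m) x2 :=
    HasDerivAt.fun_sum fun m hm => (hasDerivAt_pd2' hU (ha m hm) hx).mul_const _
  have hF := hrp.mul hAd
  have hmemU : ∀ᶠ t in nhds x2, (x1, t) ∈ U := by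
    have hc : ContinuousAt (fun t : ℝ => ((x1, t) : ℝ×ℝ)) x2 :=
      (continuous_const.prodMk continuous_id).continuousAt
    exact hc.preimage_mem_nhds (hU.mem_nhds hx)
  have hQev : ∀ᶠ t in nhds x2, 0 < 1 + 2 * g x1 t * s + s ^ 2 := by
    have hc : ContinuousAt (fun t => 1 + 2 * g x1 t * s + s ^ 2) x2 := hQd.continuousAt
    exact hc.preimage_mem_nhds (isOpen_Ioi.mem_nhds hQ)
  have hee : (fun t => lam x1 t s) =ᶠ[nhds x2]
      (fun t => (1 + 2 * g x1 t * s + s ^ 2) ^ (-(N:ℝ)/2)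
        * ∑ m ∈ Finset.Icc 1 (N-1), a m x1 t * s ^ m) := by
    filter_upwards [hmemU, hQev] with t h1 h2
    exact hlam x1 t s h1 h2
  exact HasDerivAt.congr_of_eventuallyEq hF hee

include hlam hx hQ in
lemma lam_derivs :
    HasDerivAt (fun t => lam x1 x2 t)
      ((2 * g x1 x2 + 2 * s) * (-(N:ℝ)/2)
          * (1 + 2 * g x1 x2 * s + s ^ 2) ^ (-(N:ℝ)/2 - 1)
          * (∑ m ∈ Finset.Icc 1 (N-1), a m x1 x2 * s ^ m)
        + (1 + 2 * g x1 x2 * s + s ^ 2) ^ (-(N:ℝ)/2)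
          * ∑ m ∈ Finset.Icc 1 (N-1), a m x1 x2 * (((m:ℕ):ℝ) * s ^ (m-1))) s := by
  have hQd : HasDerivAt (fun t => 1 + 2 * g x1 x2 * t + t ^ 2) (2 * g x1 x2 + 2 * s) s := by
    rw [show (2 * g x1 x2 + 2 * s)
        = 2 * g x1 x2 * 1 + ((2:ℕ):ℝ) * s ^ (2-1) from by push_cast; ring]
    exact (((hasDerivAt_id s).const_mul (2 * g x1 x2)).const_add 1).add (hasDerivAt_pow 2 s)
  have hrp := hQd.rpow_const (p := -(N:ℝ)/2) (Or.inl (ne_of_gt hQ))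
  have hAd : HasDerivAt (fun t => ∑ m ∈ Finset.Icc 1 (N-1), a m x1 x2 * t ^ m)
      (∑ m ∈ Finset.Icc 1 (N-1), a m x1 x2 * (((m:ℕ):ℝ) * s ^ (m-1))) s :=
    HasDerivAt.fun_sum fun m hm => (hasDerivAt_pow m s).const_mul (a m x1 x2)
  have hF := hrp.mul hAd
  have hQev : ∀ᶠ t in nhds s, 0 < 1 + 2 * g x1 x2 * t + t ^ 2 := by
    have hc : ContinuousAt (fun t => 1 + 2 * g x1 x2 * t + t ^ 2) s := hQd.continuousAt
    exact hc.preimage_mem_nhds (isOpen_Ioi.mem_nhds hQ)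
  have hee : (fun t => lam x1 x2 t) =ᶠ[nhds s]
      (fun t => (1 + 2 * g x1 x2 * t + t ^ 2) ^ (-(N:ℝ)/2)
        * ∑ m ∈ Finset.Icc 1 (N-1), a m x1 x2 * t ^ m) := by
    filter_upwards [hQev] with t h2
    exact hlam x1 x2 t hx h2
  exact HasDerivAt.congr_of_eventuallyEq hF hee

end lamderiv
lemma sum_rel (N : ℕ) (a : ℕ → ℝ → ℝ → ℝ) (x1 x2 s : ℝ) :
    (N:ℝ) * (∑ m ∈ Finset.Icc 1 (N-1), a m x1 x2 * s^m)
      - s * ∑ m ∈ Finset.Icc 1 (N-1), a m x1 x2 * (((m:ℕ):ℝ) * s^(m-1))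
    = ∑ m ∈ Finset.Icc 1 (N-1), a m x1 x2 * ((N-m : ℕ):ℝ) * s^m := by
  rw [Finset.mul_sum, Finset.mul_sum, ← Finset.sum_sub_distrib]
  refine Finset.sum_congr rfl fun m hm => ?_
  obtain ⟨h1m, hm1⟩ := Finset.mem_Icc.mp hm
  have hmN : m ≤ N := le_trans hm1 (Nat.sub_le N 1)
  have hs : s * s^(m-1) = s^m := by
    conv_rhs => rw [show m = (m-1)+1 from by omega]
    rw [pow_succ]; ring
  push_cast [Nat.cast_sub hmN]
  linear_combination (-(a m x1 x2 * (m:ℝ))) * hs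

section pdeeq

variable (N : ℕ) {U : Set (ℝ × ℝ)} (hU : IsOpen U)
  {g : ℝ → ℝ → ℝ} {a : ℕ → ℝ → ℝ → ℝ}
  (hg : ContDiffOn ℝ (⊤ : ℕ∞) (fun z : ℝ × ℝ => g z.1 z.2) U)
  (ha : ∀ m ∈ Finset.Icc 1 (N - 1), ContDiffOn ℝ (⊤ : ℕ∞) (fun z : ℝ × ℝ => a m z.1 z.2) U)
  {lam : ℝ → ℝ → ℝ → ℝ}
  (hlam : ∀ x1 x2 s : ℝ, (x1, x2) ∈ U → 0 < 1 + 2 * g x1 x2 * s + s ^ 2 →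
      lam x1 x2 s = (1 + 2 * g x1 x2 * s + s ^ 2) ^ (-(N : ℝ) / 2) *
        ∑ m ∈ Finset.Icc 1 (N - 1), a m x1 x2 * s ^ m)
  {x1 x2 s : ℝ} (hx : (x1, x2) ∈ U) (hQ : 0 < 1 + 2 * g x1 x2 * s + s ^ 2)

include hU hg ha hlam hx hQ in
lemma pde_eq :
    (1 + g x1 x2 * s) * pd1 (fun u v => lam u v s) x1 x2
      + (g x1 x2 + s) * pd2 (fun u v => lam u v s) x1 x2
      + (s ^ 2 * pd1 g x1 x2 - s * pd2 g x1 x2) * deriv (fun t => lam x1 x2 t) s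
    = (1 + 2 * g x1 x2 * s + s ^ 2) ^ (-(N:ℝ)/2) * Ebr N g a x1 x2 1 s := by
  have e1 := (lam_deriv1 N hU hg ha hlam hx hQ).deriv
  have e2 := (lam_deriv2 N hU hg ha hlam hx hQ).deriv
  have e3 := (lam_derivs N hlam hx hQ).deriv
  rw [show pd1 (fun u v => lam u v s) x1 x2 = deriv (fun t => lam t x2 s) x1 from rfl,
    show pd2 (fun u v => lam u v s) x1 x2 = deriv (fun t => lam x1 t s) x2 from rfl,
    e1, e2, e3]
  have hQe : (1 + 2 * g x1 x2 * s + s ^ 2) ^ (-(N:ℝ)/2 - 1) * (1 + 2 * g x1 x2 * s + s ^ 2)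
      = (1 + 2 * g x1 x2 * s + s ^ 2) ^ (-(N:ℝ)/2) := by
    rw [← Real.rpow_add_one (ne_of_gt hQ)]
    congr 1
    ring
  have hrel := sum_rel N a x1 x2 s
  unfold Ebr
  simp only [one_pow, one_mul, mul_one]
  linear_combination (-(pd1 g x1 x2) * s
        * (1 + 2 * g x1 x2 * s + s ^ 2) ^ (-(N:ℝ)/2)) * hrel
    + (-(N:ℝ) * (∑ m ∈ Finset.Icc 1 (N-1), a m x1 x2 * s ^ m) * pd1 g x1 x2 * s) * hQe

end pdeeq

lemma Ebr_scale (N : ℕ) (hN : 2 ≤ N) (g : ℝ → ℝ → ℝ) (a : ℕ → ℝ → ℝ → ℝ)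
    (x1 x2 p1 p2 : ℝ) (hp1 : p1 ≠ 0) :
    Ebr N g a x1 x2 p1 p2 = p1^(N+1) * Ebr N g a x1 x2 1 (p2/p1) := by
  set s : ℝ := p2 / p1 with hs
  have hp2 : p2 = s * p1 := by rw [hs]; field_simp
  have hsum1 : ∀ b : ℕ → ℝ, (∑ m ∈ Finset.Icc 1 (N-1), b m * (p1^(N-m)*p2^m))
      = p1^N * ∑ m ∈ Finset.Icc 1 (N-1), b m * ((1:ℝ)^(N-m)*s^m) := by
    intro b
    rw [Finset.mul_sum]
    refine Finset.sum_congr rfl fun m hm => ?_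
    obtain ⟨h1m, hm1⟩ := Finset.mem_Icc.mp hm
    have hpow : p1^(N-m) * p1^m = p1^N := by rw [← pow_add]; congr 1; omega
    rw [hp2, mul_pow, one_pow]
    calc b m * (p1^(N-m) * (s^m * p1^m)) = (p1^(N-m)*p1^m) * (b m * s^m) := by ring
    _ = p1^N * (b m * (1 * s^m)) := by rw [hpow]; ring
  have hsum2 : (∑ m ∈ Finset.Icc 1 (N-1), a m x1 x2 * (((N-m : ℕ):ℝ) * p1^(N-m-1)) * p2^m)
      = p1^(N-1) * ∑ m ∈ Finset.Icc 1 (N-1),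
          a m x1 x2 * (((N-m : ℕ):ℝ) * (1:ℝ)^(N-m-1)) * s^m := by
    rw [Finset.mul_sum]
    refine Finset.sum_congr rfl fun m hm => ?_
    obtain ⟨h1m, hm1⟩ := Finset.mem_Icc.mp hm
    have hpow : p1^(N-m-1) * p1^m = p1^(N-1) := by rw [← pow_add]; congr 1; omega
    rw [hp2, mul_pow, one_pow]
    calc a m x1 x2 * (((N-m:ℕ):ℝ) * p1^(N-m-1)) * (s^m * p1^m)
        = (p1^(N-m-1)*p1^m) * (a m x1 x2 * (((N-m:ℕ):ℝ) * 1) * s^m) := by ring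
    _ = p1^(N-1) * (a m x1 x2 * (((N-m:ℕ):ℝ) * 1) * s^m) := by rw [hpow]
  have hsum4 : (∑ m ∈ Finset.Icc 1 (N-1), a m x1 x2 * p1^(N-m) * (((m:ℕ):ℝ) * p2^(m-1)))
      = p1^(N-1) * ∑ m ∈ Finset.Icc 1 (N-1),
          a m x1 x2 * (1:ℝ)^(N-m) * (((m:ℕ):ℝ) * s^(m-1)) := by
    rw [Finset.mul_sum]
    refine Finset.sum_congr rfl fun m hm => ?_
    obtain ⟨h1m, hm1⟩ := Finset.mem_Icc.mp hm
    have hpow : p1^(N-m) * p1^(m-1) = p1^(N-1) := by rw [← pow_add]; congr 1; omega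
    rw [hp2, mul_pow, one_pow]
    calc a m x1 x2 * p1^(N-m) * (((m:ℕ):ℝ) * (s^(m-1) * p1^(m-1)))
        = (p1^(N-m)*p1^(m-1)) * (a m x1 x2 * 1 * (((m:ℕ):ℝ) * s^(m-1))) := by ring
    _ = p1^(N-1) * (a m x1 x2 * 1 * (((m:ℕ):ℝ) * s^(m-1))) := by rw [hpow]
  unfold Ebr
  rw [hsum1, hsum1, hsum2, hsum4]
  rw [show p1^N = p1^(N-1) * p1 from by rw [← pow_succ]; congr 1; omega]
  rw [show p1^(N+1) = p1^(N-1) * p1^2 from by rw [← pow_add]; congr 1; omega]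
  rw [hp2]
  ring

lemma part1' (N : ℕ) (hN : 2 ≤ N) (g : ℝ → ℝ → ℝ) (a : ℕ → ℝ → ℝ → ℝ)
    (U : Set (ℝ × ℝ))
    (f : ℝ → ℝ → ℝ → ℝ → ℝ) (lam : ℝ → ℝ → ℝ → ℝ)
    (hf : ∀ x1 x2 p1 p2 : ℝ, f x1 x2 p1 p2 =
      ∑ m ∈ Finset.Icc 1 (N - 1), a m x1 x2 * p1 ^ (N - m) * p2 ^ m)
    (hlam : ∀ x1 x2 s : ℝ, (x1, x2) ∈ U → 0 < 1 + 2 * g x1 x2 * s + s ^ 2 →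
      lam x1 x2 s = (1 + 2 * g x1 x2 * s + s ^ 2) ^ (-(N : ℝ) / 2) *
        ∑ m ∈ Finset.Icc 1 (N - 1), a m x1 x2 * s ^ m)
    (x1 x2 p1 p2 : ℝ) (hx : (x1, x2) ∈ U) (hp1 : 0 < p1)
    (hQ : 0 < 1 + 2 * g x1 x2 * (p2 / p1) + (p2 / p1) ^ 2) :
    f x1 x2 p1 p2 =
      (p1 ^ 2 + 2 * g x1 x2 * p1 * p2 + p2 ^ 2) ^ ((N : ℝ) / 2) * lam x1 x2 (p2 / p1) := by
  set s : ℝ := p2 / p1 with hs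
  have hp2 : p2 = s * p1 := by rw [hs]; field_simp
  rw [hlam x1 x2 s hx hQ, hf]
  have hbase : p1 ^ 2 + 2 * g x1 x2 * p1 * p2 + p2 ^ 2
      = p1 ^ 2 * (1 + 2 * g x1 x2 * s + s ^ 2) := by rw [hp2]; ring
  rw [hbase, Real.mul_rpow (sq_nonneg p1) hQ.le]
  have h1 : ((p1 ^ 2 : ℝ)) ^ ((N:ℝ)/2) = p1 ^ N := by
    rw [← Real.rpow_natCast p1 2, ← Real.rpow_mul hp1.le]
    rw [show ((2:ℕ):ℝ) * ((N:ℝ)/2) = ((N:ℕ):ℝ) from by push_cast; ring, Real.rpow_natCast]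
  rw [h1]
  have hcancel : (1 + 2 * g x1 x2 * s + s ^ 2) ^ ((N:ℝ)/2)
      * ((1 + 2 * g x1 x2 * s + s ^ 2) ^ (-(N:ℝ)/2)
        * ∑ m ∈ Finset.Icc 1 (N-1), a m x1 x2 * s ^ m)
      = ∑ m ∈ Finset.Icc 1 (N-1), a m x1 x2 * s ^ m := by
    rw [← mul_assoc, ← Real.rpow_add hQ,
      show (N:ℝ)/2 + -(N:ℝ)/2 = 0 from by ring, Real.rpow_zero, one_mul]
  rw [mul_assoc, hcancel, Finset.mul_sum]
  refine Finset.sum_congr rfl fun m hm => ?_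
  obtain ⟨h1m, hm1⟩ := Finset.mem_Icc.mp hm
  have hpow : p1^(N-m) * p1^m = p1^N := by rw [← pow_add]; congr 1; omega
  rw [hp2, mul_pow]
  calc a m x1 x2 * p1^(N-m) * (s^m * p1^m)
      = (p1^(N-m) * p1^m) * (a m x1 x2 * s^m) := by ring
  _ = p1^N * (a m x1 x2 * s^m) := by rw [hpow]

/-- Writing the polynomial ansatz `f = ∑_{m=1}^{N−1} a_m p₁^{N−m}p₂^m` in the form
`f = (p₁² + 2g p₁p₂ + p₂²)^{N/2} λ(x, s)`, `s = p₂/p₁`, the first-integral condition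
`{f,H} = 0` for `H = (1/2)p₁² + g p₁p₂ + (1/2)p₂²` is equivalent to the linear
first-order PDE `(1+gs)λ_{x¹} + (g+s)λ_{x²} + (s²g_{x¹} − s g_{x²})λ_s = 0`. -/
theorem integral_condition_as_linear_PDE_on_lambda
    (N : ℕ) (hN : 2 ≤ N)
    (U : Set (ℝ × ℝ)) (hU : IsOpen U)
    (g : ℝ → ℝ → ℝ) (a : ℕ → ℝ → ℝ → ℝ)
    (hg : ContDiffOn ℝ (⊤ : ℕ∞) (fun z : ℝ × ℝ => g z.1 z.2) U)
    (ha : ∀ m ∈ Finset.Icc 1 (N - 1), ContDiffOn ℝ (⊤ : ℕ∞) (fun z : ℝ × ℝ => a m z.1 z.2) U)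
    (H f : ℝ → ℝ → ℝ → ℝ → ℝ) (lam : ℝ → ℝ → ℝ → ℝ)
    (hH : ∀ x1 x2 p1 p2 : ℝ, H x1 x2 p1 p2 =
      (1 / 2) * p1 ^ 2 + g x1 x2 * p1 * p2 + (1 / 2) * p2 ^ 2)
    (hf : ∀ x1 x2 p1 p2 : ℝ, f x1 x2 p1 p2 =
      ∑ m ∈ Finset.Icc 1 (N - 1), a m x1 x2 * p1 ^ (N - m) * p2 ^ m)
    (hlam : ∀ x1 x2 s : ℝ, (x1, x2) ∈ U → 0 < 1 + 2 * g x1 x2 * s + s ^ 2 →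
      lam x1 x2 s = (1 + 2 * g x1 x2 * s + s ^ 2) ^ (-(N : ℝ) / 2) *
        ∑ m ∈ Finset.Icc 1 (N - 1), a m x1 x2 * s ^ m) :
    -- (1) factorized form of the polynomial integral
    (∀ x1 x2 p1 p2 : ℝ, (x1, x2) ∈ U → 0 < p1 →
        0 < 1 + 2 * g x1 x2 * (p2 / p1) + (p2 / p1) ^ 2 →
      f x1 x2 p1 p2 =
        (p1 ^ 2 + 2 * g x1 x2 * p1 * p2 + p2 ^ 2) ^ ((N : ℝ) / 2) * lam x1 x2 (p2 / p1))
    ∧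
    -- (2) the first-integral condition is equivalent to a linear PDE on λ
    ((∀ x1 x2 p1 p2 : ℝ, (x1, x2) ∈ U → 0 < p1 →
        0 < 1 + 2 * g x1 x2 * (p2 / p1) + (p2 / p1) ^ 2 →
        pbracket f H x1 x2 p1 p2 = 0) ↔
      (∀ x1 x2 s : ℝ, (x1, x2) ∈ U → 0 < 1 + 2 * g x1 x2 * s + s ^ 2 →
        (1 + g x1 x2 * s) * pd1 (fun u v => lam u v s) x1 x2
          + (g x1 x2 + s) * pd2 (fun u v => lam u v s) x1 x2
          + (s ^ 2 * pd1 g x1 x2 - s * pd2 g x1 x2) * deriv (fun t => lam x1 x2 t) s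
          = 0)) := by
  refine ⟨fun x1 x2 p1 p2 hx hp1 hQ => part1' N hN g a U f lam hf hlam x1 x2 p1 p2 hx hp1 hQ, ?_⟩
  constructor
  · intro hbr x1 x2 s hx hQ
    have h0 : Ebr N g a x1 x2 1 s = 0 := by
      have hb := hbr x1 x2 1 s hx one_pos (by simpa using hQ)
      rwa [pbracket_eq N U hU g a hg ha H f hH hf x1 x2 1 s hx] at hb
    rw [pde_eq N hU hg ha hlam hx hQ, h0, mul_zero]
  · intro hpde x1 x2 p1 p2 hx hp1 hQ
    have h1 := hpde x1 x2 (p2 / p1) hx hQ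
    rw [pde_eq N hU hg ha hlam hx hQ] at h1
    have hQcpos : 0 < (1 + 2 * g x1 x2 * (p2 / p1) + (p2 / p1) ^ 2) ^ (-(N:ℝ)/2) :=
      Real.rpow_pos_of_pos hQ _
    have hE1 : Ebr N g a x1 x2 1 (p2 / p1) = 0 := by
      rcases mul_eq_zero.mp h1 with h | h
      · exact absurd h hQcpos.ne'
      · exact h
    rw [pbracket_eq N U hU g a hg ha H f hH hf x1 x2 p1 p2 hx,
      Ebr_scale N hN g a x1 x2 p1 p2 (ne_of_gt hp1), hE1, mul_zero]
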